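/- Let μ be the shift-invariant Markov measure on X^ℕ defined by a stochastic matrix L with positive stationary probability vector l, let A = (X, S, π, λ) be a Mealy automaton with initial state g acting on X^ℕ, let t be a stationary probability vector of T = T_{L,A}, let P be the Markov measure on (S×X)^ℕ defined by T and t, and let Q = λ̃_*P. If t(g,x) > 0 for all x ∈ X, then the pushforward measure g_*μ is absolutely continuous with respect to Q. -/

import Mathlib

open MeasureTheory Filter Topology
open scoped ENNReal

namespace AutoMarkov

variable {X : Type*} {S : Type*}

/-- The cylinder set of sequences starting with the finite word `w`. -/
def cylinder (w : List X) : Set (ℕ → X) :=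
  {ω | ∀ i : Fin w.length, ω i = w.get i}

/-- Product of transition probabilities `L x y₁ * L y₁ y₂ * ⋯` along a word. -/
noncomputable def chainWeight (L : X → X → ℝ≥0∞) : X → List X → ℝ≥0∞
  | _, [] => 1
  | x, y :: v => L x y * chainWeight L y v

/-- The Markov weight `l_{x₁} L_{x₁x₂} ⋯ L_{x_{n-1}x_n}` of a finite word. -/
noncomputable def cylWeight (l : X → ℝ≥0∞) (L : X → X → ℝ≥0∞) : List X → ℝ≥0∞
  | [] => 1
  | x :: v => l x * chainWeight L x v

/-- The one-sided shift on sequences. -/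
def shift : (ℕ → X) → ℕ → X := fun ω n => ω (n + 1)

/-- Extension of the transition function of a Mealy automaton to finite words. -/
def piExt (πf : S → X → S) : S → List X → S
  | s, [] => s
  | s, x :: w => piExt πf (πf s x) w

/-- Extension of the output function of a Mealy automaton to finite words. -/
def lamExt (πf : S → X → S) (lam : S → X → X) : S → List X → List X
  | _, [] => []
  | s, x :: w => lam s x :: lamExt πf lam (πf s x) w

/-- The action of the state `g` of a Mealy automaton on infinite sequences. -/
def autAct (πf : S → X → S) (lam : S → X → X) (g : S) : (ℕ → X) → ℕ → X :=
  fun ω n => lam (piExt πf g (List.ofFn fun i : Fin n => ω i)) (ω n)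

/-- The matrix `T = T_{L,A}` on `S × X`. -/
noncomputable def Tmat [DecidableEq S] (πf : S → X → S) (L : X → X → ℝ≥0∞) :
    S × X → S × X → ℝ≥0∞ :=
  fun p q => if πf p.1 p.2 = q.1 then L p.2 q.2 else 0

/-- The matrix `K = K_{l,A}` on `S`. -/
noncomputable def Kmat [Fintype X] [DecidableEq S] (πf : S → X → S) (l : X → ℝ≥0∞) :
    S → S → ℝ≥0∞ :=
  fun s₀ s₁ => ∑ x : X, if πf s₀ x = s₁ then l x else 0

/-- The automaton is strongly connected: any state is reachable from any state. -/
def StronglyConnected (πf : S → X → S) : Prop :=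
  ∀ s r : S, ∃ w : List X, piExt πf s w = r

/-- The automaton is `L`-strongly connected. -/
def LStronglyConnected (πf : S → X → S) (L : X → X → ℝ≥0∞) : Prop :=
  ∀ s r : S, ∀ x y : X, ∃ w : List X,
    piExt πf s (x :: w) = r ∧ chainWeight L x (w ++ [y]) ≠ 0

/-- Irreducibility of a stochastic matrix: positive-probability path between any
two symbols. -/
def IrreducibleMat (L : X → X → ℝ≥0∞) : Prop :=
  ∀ x y : X, ∃ v : List X, chainWeight L x (v ++ [y]) ≠ 0

/-- The automaton is reversible: every state has a unique `x`-predecessor. -/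
def Reversible (πf : S → X → S) : Prop :=
  ∀ (s : S) (x : X), ∃! s₀ : S, πf s₀ x = s

/-- The map `π̃_g : X^ℕ → (S×X)^ℕ` recording the states of the automaton along
with the input. -/
def piTilde (πf : S → X → S) (g : S) : (ℕ → X) → ℕ → S × X :=
  fun ω n => (piExt πf g (List.ofFn fun i : Fin n => ω i), ω n)

/-- The 1-block factor map `λ̃ : (S×X)^ℕ → X^ℕ`. -/
def lamTilde (lam : S → X → X) : (ℕ → S × X) → ℕ → X :=
  fun ω n => lam (ω n).1 (ω n).2


section Aux

variable {α : Type*}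

lemma cylinder_nil : cylinder ([] : List α) = Set.univ := by
  ext ω
  simp only [cylinder, Set.mem_setOf_eq, Set.mem_univ, iff_true]
  exact fun i => i.elim0

lemma mem_cylinder_ofFn {n : ℕ} (u : Fin n → α) (ω : ℕ → α) :
    ω ∈ cylinder (List.ofFn u) ↔ ∀ i : Fin n, ω i = u i := by
  constructor
  · intro h i
    have := h (Fin.cast (List.length_ofFn : (List.ofFn u).length = n).symm i)
    simpa [List.get_ofFn] using this
  · intro h i
    have := h (Fin.cast (List.length_ofFn : (List.ofFn u).length = n) i)
    simpa [List.get_ofFn, Fin.cast] using this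

lemma mem_cylinder_cons (x : α) (v : List α) (ω : ℕ → α) :
    ω ∈ cylinder (x :: v) ↔ ω 0 = x ∧ shift ω ∈ cylinder v := by
  constructor
  · intro h
    refine ⟨h ⟨0, by simp⟩, fun i => ?_⟩
    have := h i.succ
    simpa [shift] using this
  · rintro ⟨h0, h1⟩ i
    refine Fin.cases ?_ (fun j => ?_) i
    · simpa using h0
    · simpa [shift] using h1 j

lemma measurableSet_cylinder [MeasurableSpace α] [MeasurableSingletonClass α]
    (w : List α) : MeasurableSet (cylinder w) := by
  have : cylinder w = ⋂ i : Fin w.length, (fun ω : ℕ → α => ω i) ⁻¹' {w.get i} := by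
    ext ω; simp [cylinder]
  rw [this]
  exact MeasurableSet.iInter fun i => (measurable_pi_apply _) (measurableSet_singleton _)

lemma generateFrom_cylinder [Countable α] [MeasurableSpace α] [MeasurableSingletonClass α] :
    MeasurableSpace.generateFrom (Set.range (cylinder (X := α))) = MeasurableSpace.pi := by
  apply le_antisymm
  · rw [MeasurableSpace.generateFrom_le_iff]
    rintro s ⟨w, rfl⟩
    exact measurableSet_cylinder w
  · have key : ∀ n : ℕ,
        @Measurable (ℕ → α) α (MeasurableSpace.generateFrom (Set.range (cylinder (X := α)))) _
          (fun ω => ω n) := by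
      intro n
      refine @measurable_to_countable' α (ℕ → α) _ _
        (MeasurableSpace.generateFrom (Set.range (cylinder (X := α)))) _ (fun a => ?_)
      have heq : (fun ω : ℕ → α => ω n) ⁻¹' {a}
          = ⋃ v : Fin n → α, cylinder (List.ofFn (Fin.snoc v a)) := by
        ext ω
        simp only [Set.mem_preimage, Set.mem_singleton_iff, Set.mem_iUnion, mem_cylinder_ofFn]
        constructor
        · intro h
          refine ⟨fun i => ω i, fun i => ?_⟩
          refine Fin.lastCases ?_ (fun j => ?_) i
          · simpa [Fin.snoc] using h
          · simp [Fin.snoc]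
        · rintro ⟨v, hv⟩
          simpa [Fin.snoc] using hv (Fin.last n)
      rw [heq]
      exact MeasurableSet.iUnion fun v =>
        MeasurableSpace.measurableSet_generateFrom ⟨_, rfl⟩
    exact iSup_le fun n => measurable_iff_comap_le.mp (key n)

lemma cylinder_inter_of_le {w v : List α} (h : w.length ≤ v.length)
    (hne : (cylinder w ∩ cylinder v).Nonempty) : cylinder w ∩ cylinder v = cylinder v := by
  obtain ⟨ω, hw, hv⟩ := hne
  refine Set.inter_eq_self_of_subset_right fun τ hτ i => ?_
  have h2 : ω i = v.get ⟨i, lt_of_lt_of_le i.2 h⟩ := hv ⟨i, lt_of_lt_of_le i.2 h⟩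
  have h3 : τ i = v.get ⟨i, lt_of_lt_of_le i.2 h⟩ := hτ ⟨i, lt_of_lt_of_le i.2 h⟩
  rw [h3, ← h2, hw i]

lemma isPiSystem_cylinder : IsPiSystem (Set.range (cylinder (X := α))) := by
  rintro _ ⟨w, rfl⟩ _ ⟨v, rfl⟩ hne
  rcases le_total w.length v.length with h | h
  · exact ⟨v, (cylinder_inter_of_le h hne).symm⟩
  · rw [Set.inter_comm] at hne ⊢
    exact ⟨w, (cylinder_inter_of_le h hne).symm⟩

end Aux

section Aut
variable [DecidableEq S]

/-- State-consistency of a word in `(S × X)^*` starting at state `s`. -/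
def scons (πf : S → X → S) : S → List (S × X) → Bool
  | _, [] => true
  | s, p :: v => (decide (p.1 = s)) && scons πf (πf s p.2) v

omit [DecidableEq S] in
lemma shift_piTilde (πf : S → X → S) (s : S) (ω : ℕ → X) :
    shift (piTilde πf s ω) = piTilde πf (πf s (ω 0)) (shift ω) := by
  funext n
  simp only [shift, piTilde]
  congr 1
  have : (List.ofFn fun i : Fin (n + 1) => ω i) = ω 0 :: List.ofFn fun i : Fin n => ω (i + 1) := by
    rw [List.ofFn_succ]
    rfl
  rw [this]
  rfl

lemma mem_cylinder_piTilde (πf : S → X → S) :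
    ∀ (v : List (S × X)) (s : S) (ω : ℕ → X),
      piTilde πf s ω ∈ cylinder v ↔
        (scons πf s v = true ∧ ω ∈ cylinder (v.map Prod.snd))
  | [], s, ω => by simp [cylinder_nil, scons]
  | p :: v, s, ω => by
    rw [mem_cylinder_cons, shift_piTilde, mem_cylinder_piTilde πf v, List.map_cons,
      mem_cylinder_cons]
    have h0 : piTilde πf s ω 0 = (s, ω 0) := by
      simp [piTilde, List.ofFn_zero, piExt]
    rw [h0]
    constructor
    · rintro ⟨hp, hsc, hm⟩
      obtain rfl : p = (s, ω 0) := hp.symm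
      simp [scons, hsc, hm]
    · rintro ⟨hb, hω0, hm⟩
      simp only [scons, Bool.and_eq_true, decide_eq_true_eq] at hb
      obtain ⟨h1, h2⟩ := hb
      refine ⟨?_, ?_, hm⟩
      · rw [Prod.ext_iff]; exact ⟨h1.symm, hω0⟩
      · rwa [hω0]

lemma piTilde_preimage_cylinder (πf : S → X → S) (g : S) (w : List (S × X)) :
    piTilde πf g ⁻¹' cylinder w =
      if scons πf g w = true then cylinder (w.map Prod.snd) else ∅ := by
  ext ω
  simp only [Set.mem_preimage, mem_cylinder_piTilde]
  split_ifs with h <;> simp [h]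

lemma chainWeight_Tmat (πf : S → X → S) (L : X → X → ℝ≥0∞) :
    ∀ (v : List (S × X)) (p : S × X),
      chainWeight (Tmat πf L) p v =
        if scons πf (πf p.1 p.2) v = true then chainWeight L p.2 (v.map Prod.snd) else 0
  | [], p => by simp [chainWeight, scons]
  | q :: v, p => by
    rw [List.map_cons]
    show Tmat πf L p q * chainWeight (Tmat πf L) q v = _
    rw [chainWeight_Tmat πf L v q]
    by_cases h : πf p.1 p.2 = q.1
    · simp only [Tmat, scons, h, eq_self_iff_true, if_true, decide_true, Bool.true_and]
      split_ifs with h2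
      · rfl
      · rw [mul_zero]
    · have hz : Tmat πf L p q = 0 := by simp [Tmat, h]
      rw [hz, zero_mul]
      have hd : decide (q.1 = πf p.1 p.2) = false := by
        simp only [decide_eq_false_iff_not]
        exact fun hc => h hc.symm
      simp [scons, hd]

end Aut

theorem stmt6 [Fintype X] [Fintype S] [DecidableEq S]
    [MeasurableSpace X] [MeasurableSingletonClass X]
    [MeasurableSpace S] [MeasurableSingletonClass S]
    (L : X → X → ℝ≥0∞) (l : X → ℝ≥0∞)
    (hL : ∀ x, ∑ y : X, L x y = 1) (hl1 : ∑ x : X, l x = 1)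
    (hstat : ∀ y, ∑ x : X, l x * L x y = l y) (hlpos : ∀ x, 0 < l x)
    (μ : Measure (ℕ → X)) (hμ : ∀ w : List X, μ (cylinder w) = cylWeight l L w)
    (πf : S → X → S) (lam : S → X → X) (g : S)
    (t : S × X → ℝ≥0∞) (ht1 : ∑ p : S × X, t p = 1)
    (htstat : ∀ q : S × X, ∑ p : S × X, t p * Tmat πf L p q = t q)
    (P : Measure (ℕ → S × X))
    (hP : ∀ w : List (S × X), P (cylinder w) = cylWeight t (Tmat πf L) w)
    (hmeas₁ : Measurable (autAct πf lam g)) (hmeas₂ : Measurable (lamTilde lam))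
    (hpos : ∀ x : X, 0 < t (g, x)) :
    Measure.map (autAct πf lam g) μ ≪ Measure.map (lamTilde lam) P := by
  classical
  have htle : ∀ p : S × X, t p ≤ 1 := fun p =>
    ht1 ▸ Finset.single_le_sum (fun i _ => zero_le) (Finset.mem_univ p)
  have htfin : ∀ p : S × X, t p ≠ ∞ := fun p => ((htle p).trans_lt ENNReal.one_lt_top).ne
  have htne : ∀ x : X, t (g, x) ≠ 0 := fun x => (hpos x).ne'
  set c : S × X → ℝ≥0∞ := fun p => if p.1 = g then l p.2 * (t (g, p.2))⁻¹ else 0 with hcdef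
  set f : (ℕ → S × X) → ℝ≥0∞ := fun ω => c (ω 0) with hfdef
  have hPiT : Measurable (piTilde πf g) := by
    refine measurable_pi_lambda _ fun n => Measurable.prod ?_ ?_
    · exact (measurable_of_countable (fun v : Fin n → X => piExt πf g (List.ofFn v))).comp
        (measurable_pi_lambda _ fun i : Fin n => measurable_pi_apply (i : ℕ))
    · exact measurable_pi_apply n
  have hν₁ : ∀ w : List (S × X), (Measure.map (piTilde πf g) μ) (cylinder w) =
      if scons πf g w = true then cylWeight l L (w.map Prod.snd) else 0 := by
    intro w
    rw [Measure.map_apply hPiT (measurableSet_cylinder w), piTilde_preimage_cylinder]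
    split_ifs
    · exact hμ _
    · exact measure_empty
  have hν₂ : ∀ (p : S × X) (v : List (S × X)),
      (P.withDensity f) (cylinder (p :: v)) = c p * (t p * chainWeight (Tmat πf L) p v) := by
    intro p v
    rw [withDensity_apply _ (measurableSet_cylinder _)]
    have hc : ∀ ω ∈ cylinder (p :: v), f ω = c p := by
      intro ω hω
      have h0 : ω 0 = p := ((mem_cylinder_cons p v ω).mp hω).1
      rw [hfdef]
      simp only [h0]
    rw [setLIntegral_congr_fun (measurableSet_cylinder _) (fun ω hω => hc ω hω), setLIntegral_const,
      hP]
    rfl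
  have hcyl : ∀ (p : S × X) (v : List (S × X)),
      (Measure.map (piTilde πf g) μ) (cylinder (p :: v)) =
        (P.withDensity f) (cylinder (p :: v)) := by
    intro p v
    rw [hν₁, hν₂, chainWeight_Tmat]
    by_cases hpg : p.1 = g
    · have hcp : c p = l p.2 * (t (g, p.2))⁻¹ := by rw [hcdef]; exact if_pos hpg
      have htp : t p = t (g, p.2) := by rw [← hpg]
      have hsc : scons πf g (p :: v) = scons πf (πf p.1 p.2) v := by
        simp [scons, hpg]
      rw [hcp, htp, hsc]
      split_ifs with h2
      · have hc1 : (t (g, p.2))⁻¹ * t (g, p.2) = 1 :=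
          ENNReal.inv_mul_cancel (htne _) (htfin _)
        rw [show l p.2 * (t (g, p.2))⁻¹ * (t (g, p.2) * chainWeight L p.2 (v.map Prod.snd))
            = (t (g, p.2))⁻¹ * t (g, p.2) * (l p.2 * chainWeight L p.2 (v.map Prod.snd)) from
          by ring, hc1, one_mul]
        rfl
      · simp
    · have hcp : c p = 0 := by rw [hcdef]; exact if_neg hpg
      have hsc : scons πf g (p :: v) = false := by simp [scons, hpg]
      rw [hcp, hsc, zero_mul]
      simp
  have huniv1 : (Measure.map (piTilde πf g) μ) Set.univ = 1 := by
    rw [← cylinder_nil, hν₁]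
    simp [scons, cylWeight]
  have hU : (Set.univ : Set (ℕ → S × X)) = ⋃ p : S × X, cylinder [p] := by
    ext ω
    simp only [Set.mem_univ, true_iff, Set.mem_iUnion]
    exact ⟨ω 0, fun i => by fin_cases i; rfl⟩
  have hdisj : Pairwise (Function.onFun Disjoint fun p : S × X => cylinder [p]) := by
    intro p q hpq
    rw [Function.onFun, Set.disjoint_left]
    intro ω hp hq
    exact hpq ((hp ⟨0, Nat.zero_lt_one⟩).symm.trans (hq ⟨0, Nat.zero_lt_one⟩))
  have hterm : ∀ x : X, c (g, x) * (t (g, x) * chainWeight (Tmat πf L) (g, x) []) = l x := by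
    intro x
    show c (g, x) * (t (g, x) * 1) = l x
    have hcg : c (g, x) = l x * (t (g, x))⁻¹ := by rw [hcdef]; exact if_pos rfl
    rw [hcg, mul_one, mul_assoc, ENNReal.inv_mul_cancel (htne x) (htfin _), mul_one]
  have huniv2 : (P.withDensity f) Set.univ = 1 := by
    calc (P.withDensity f) Set.univ
        = ∑' p : S × X, (P.withDensity f) (cylinder [p]) := by
          rw [hU, measure_iUnion hdisj fun p => measurableSet_cylinder _]
      _ = ∑ p : S × X, (P.withDensity f) (cylinder [p]) := tsum_fintype _
      _ = ∑ p : S × X, c p * (t p * chainWeight (Tmat πf L) p []) :=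
          Finset.sum_congr rfl fun p _ => hν₂ p []
      _ = 1 := by
          rw [Fintype.sum_prod_type]
          rw [Finset.sum_eq_single g]
          · rw [Finset.sum_congr rfl fun x _ => hterm x]
            exact hl1
          · intro s _ hs
            refine Finset.sum_eq_zero fun x _ => ?_
            have hcz : c (s, x) = 0 := by rw [hcdef]; exact if_neg hs
            rw [hcz, zero_mul]
          · intro h
            exact absurd (Finset.mem_univ g) h
  haveI i1 : IsFiniteMeasure (Measure.map (piTilde πf g) μ) :=
    ⟨by rw [huniv1]; exact ENNReal.one_lt_top⟩
  haveI i2 : IsFiniteMeasure (P.withDensity f) :=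
    ⟨by rw [huniv2]; exact ENNReal.one_lt_top⟩
  have key : Measure.map (piTilde πf g) μ = P.withDensity f := by
    refine ext_of_generate_finite (Set.range (cylinder (X := S × X)))
      generateFrom_cylinder.symm isPiSystem_cylinder ?_ (by rw [huniv1, huniv2])
    rintro s ⟨w, rfl⟩
    cases w with
    | nil => rw [cylinder_nil, huniv1, huniv2]
    | cons p v => exact hcyl p v
  have hmm : Measure.map (autAct πf lam g) μ = Measure.map (lamTilde lam) (P.withDensity f) := by
    rw [← key, Measure.map_map hmeas₂ hPiT]
    rfl
  rw [hmm]
  exact (withDensity_absolutelyContinuous P f).map hmeas₂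


end AutoMarkov
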